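/- arXiv:1812.08905 — 2 statements merged into one kernel-verified Lean document; each statement's English description precedes it below -/
import Mathlib

section
/- Let 0 ≤ r ≤ N. Every vertex function V supported on the Hamming sphere Σ_r can be written as V = Σ_{k=0}^{r} A₊^{r−k}W_k with W_k ∈ W_k for each 0 ≤ k ≤ r. Moreover, for any choice of W_k ∈ W_k (0 ≤ k ≤ r), the vectors A₊^{r−k}W_k are pairwise orthogonal in ℓ²(Σ_r). -/
open Finset

/-- Outer adjacency operator on vertex functions of the Boolean hypercube `B_N`:
`(A₊V)(S) = Σ_{s∈S} V(S∖{s})`. -/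
def Aplus (N : ℕ) (V : Finset (Fin N) → ℝ) : Finset (Fin N) → ℝ :=
  fun S => ∑ s ∈ S, V (S.erase s)

/-- Inner adjacency operator: `(A₋V)(R) = Σ_{b∉R} V(R∪{b})`. -/
def Aminus (N : ℕ) (V : Finset (Fin N) → ℝ) : Finset (Fin N) → ℝ :=
  fun R => ∑ b ∈ Rᶜ, V (insert b R)

/-- Adjacency operator `A = A₊ + A₋`. -/
def Adj (N : ℕ) (V : Finset (Fin N) → ℝ) : Finset (Fin N) → ℝ :=
  fun S => Aplus N V S + Aminus N V S

/-- Graph Laplacian `L = N·I − A`. -/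
def Lap (N : ℕ) (V : Finset (Fin N) → ℝ) : Finset (Fin N) → ℝ :=
  fun S => (N : ℝ) * V S - Adj N V S

/-- Inner product `⟨V,U⟩ = Σ_S V(S)U(S)` on vertex functions. -/
def inner' (N : ℕ) (V U : Finset (Fin N) → ℝ) : ℝ :=
  ∑ S : Finset (Fin N), V S * U S

/-- `V` is supported on the Hamming sphere `Σ_r` (vanishes off sets of cardinality `r`). -/
def suppOn (N r : ℕ) (V : Finset (Fin N) → ℝ) : Prop :=
  ∀ S : Finset (Fin N), S.card ≠ r → V S = 0

/-- Membership in `W_r`: supported on `Σ_r` and orthogonal to `A₊ℓ²(Σ_{r−1})`.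
(For `r = 0` the orthogonality condition is vacuous, so `W_0 = ℓ²(Σ_0)`.) -/
def memW (N r : ℕ) (W : Finset (Fin N) → ℝ) : Prop :=
  suppOn N r W ∧
    ∀ U : Finset (Fin N) → ℝ, suppOn N (r - 1) U → inner' N W (Aplus N U) = 0

/-- `m(r,k) = Σ_{j=0}^{k} (N − 2(r+j))`. -/
def mcoef (N r k : ℕ) : ℝ :=
  ∑ j ∈ Finset.range (k + 1), ((N : ℝ) - 2 * ((r : ℝ) + (j : ℝ)))

/-- Hadamard vector `H_S(R) = (−1)^{|R∩S|}`. -/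
def Had (N : ℕ) (S R : Finset (Fin N)) : ℝ := (-1 : ℝ) ^ (R ∩ S).card

/-- Spatial truncation `Q_K`: restriction to the Hamming ball of radius `K`. -/
def QK (N K : ℕ) (V : Finset (Fin N) → ℝ) : Finset (Fin N) → ℝ :=
  fun S => if S.card ≤ K then V S else 0

/-- Spectral projection `P_K`: orthogonal projection onto `span{H_S : |S| ≤ K}`,
given by `P_K V = Σ_{|S|≤K} (⟨V,H_S⟩/2^N)·H_S`. -/
noncomputable def PK (N K : ℕ) (V : Finset (Fin N) → ℝ) : Finset (Fin N) → ℝ :=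
  fun R => ∑ S ∈ Finset.univ.filter (fun S : Finset (Fin N) => S.card ≤ K),
    (inner' N V (Had N S) / 2 ^ N) * Had N S R

/-- Diagonal operator `(TV)(R) = √(2|R|)·V(R)`. -/
noncomputable def Tdiag (N : ℕ) (V : Finset (Fin N) → ℝ) : Finset (Fin N) → ℝ :=
  fun R => Real.sqrt (2 * (R.card : ℝ)) * V R

/-- Boolean difference operator conjugated by the Hadamard transform:
`HBDO = T(αI − L)T + βL`. -/
noncomputable def HBDO (N : ℕ) (α β : ℝ) (V : Finset (Fin N) → ℝ) : Finset (Fin N) → ℝ :=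
  fun R => Tdiag N (fun S => α * Tdiag N V S - Lap N (Tdiag N V) S) R + β * Lap N V R

/-- Hadamard transform `(HV)(R) = Σ_S (−1)^{|R∩S|} V(S)`. -/
def Hmat (N : ℕ) (V : Finset (Fin N) → ℝ) : Finset (Fin N) → ℝ :=
  fun R => ∑ S : Finset (Fin N), Had N S R * V S

/-- Commutator `C = A₋A₊ − A₊A₋`. -/
def Cop (N : ℕ) (V : Finset (Fin N) → ℝ) : Finset (Fin N) → ℝ :=
  fun S => Aminus N (Aplus N V) S - Aplus N (Aminus N V) S

/-!
The adjacency operators are adjoint, `⟨A₊V, U⟩ = ⟨V, A₋U⟩`, and on `ℓ²(Σ_m)` they satisfy the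
commutation relation `A₋A₊ = A₊A₋ + (N - 2m)`. A vector `W ∈ W_k` is orthogonal to
`A₊ℓ²(Σ_{k-1}) ∋ A₊A₋W`, so `‖A₋W‖² = ⟨W, A₊A₋W⟩ = 0`. The commutation relation then gives
`A₋A₊^{j+1}W = m(k,j) A₊^jW`, so moving the factors of `A₊^a` in `⟨A₊^aV, A₊^bW⟩` across the
inner product one at a time lowers `b` until `A₋W = 0` is reached whenever `b < a`.
Existence is induction on `r`: the orthogonal splitting of `ℓ²(Σ_{r+1})` along `A₊ℓ²(Σ_r)` writes
`V = W + A₊U` with `W ∈ W_{r+1}` and `U ∈ ℓ²(Σ_r)`.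
-/

variable {N : ℕ}

lemma suppOn_aplus {m : ℕ} {V : Finset (Fin N) → ℝ} (h : suppOn N m V) :
    suppOn N (m + 1) (Aplus N V) := by
  intro S hS
  refine sum_eq_zero fun s hs => h _ ?_
  have : 1 ≤ S.card := card_pos.mpr ⟨s, hs⟩
  rw [card_erase_of_mem hs]
  omega

lemma suppOn_aplus_iterate {m : ℕ} {V : Finset (Fin N) → ℝ} (h : suppOn N m V) (j : ℕ) :
    suppOn N (m + j) ((Aplus N)^[j] V) := by
  induction j with
  | zero => exact h
  | succ j ih =>
    rw [Function.iterate_succ_apply', ← add_assoc]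
    exact suppOn_aplus ih

lemma suppOn_aminus {m : ℕ} {V : Finset (Fin N) → ℝ} (h : suppOn N m V) :
    suppOn N (m - 1) (Aminus N V) := by
  intro R hR
  refine sum_eq_zero fun b hb => h _ ?_
  rw [card_insert_of_notMem (mem_compl.mp hb)]
  omega

def sphereSubmodule (N m : ℕ) : Submodule ℝ (Finset (Fin N) → ℝ) where
  carrier := {V | suppOn N m V}
  add_mem' ha hb S hS := by simp [ha S hS, hb S hS]
  zero_mem' _ _ := rfl
  smul_mem' c _ ha S hS := by simp [ha S hS]

def aplusLinearMap (N : ℕ) : (Finset (Fin N) → ℝ) →ₗ[ℝ] Finset (Fin N) → ℝ where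
  toFun := Aplus N
  map_add' V U := by ext S; simp [Aplus, sum_add_distrib]
  map_smul' c V := by ext S; simp [Aplus, mul_sum]

lemma aplus_smul (c : ℝ) (V : Finset (Fin N) → ℝ) : Aplus N (c • V) = c • Aplus N V :=
  (aplusLinearMap N).map_smul c V

lemma aplus_zero : Aplus N (0 : Finset (Fin N) → ℝ) = 0 :=
  (aplusLinearMap N).map_zero

lemma aplus_sum {ι : Type*} (t : Finset ι) (f : ι → Finset (Fin N) → ℝ) :
    Aplus N (∑ i ∈ t, f i) = ∑ i ∈ t, Aplus N (f i) :=
  map_sum (aplusLinearMap N) f t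

lemma inner'_eq_inner (V U : Finset (Fin N) → ℝ) :
    inner' N V U = inner ℝ (WithLp.toLp 2 V) (WithLp.toLp 2 U) := by
  simp [inner', PiLp.inner_apply, mul_comm]

lemma inner'_comm (V U : Finset (Fin N) → ℝ) : inner' N V U = inner' N U V := by
  rw [inner'_eq_inner, inner'_eq_inner, real_inner_comm]

lemma inner'_self_eq_zero {V : Finset (Fin N) → ℝ} : inner' N V V = 0 ↔ V = 0 := by
  rw [inner'_eq_inner, inner_self_eq_zero, WithLp.toLp_eq_zero]

lemma inner'_smul_right (c : ℝ) (V U : Finset (Fin N) → ℝ) :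
    inner' N V (c • U) = c * inner' N V U := by
  simp only [inner', Pi.smul_apply, smul_eq_mul, mul_sum]
  exact sum_congr rfl fun _ _ => by ring

lemma inner'_eq_zero_of_suppOn {m n : ℕ} {V U : Finset (Fin N) → ℝ} (hV : suppOn N m V)
    (hU : suppOn N n U) (hmn : m ≠ n) : inner' N V U = 0 :=
  sum_eq_zero fun S _ => by
    rcases eq_or_ne S.card m with hS | hS
    · rw [hU S (hS ▸ hmn), mul_zero]
    · rw [hV S hS, zero_mul]

lemma inner'_aplus (V U : Finset (Fin N) → ℝ) :
    inner' N (Aplus N V) U = inner' N V (Aminus N U) := by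
  simp only [inner', Aplus, Aminus, sum_mul, mul_sum]
  rw [sum_sigma', sum_sigma']
  refine sum_nbij' (fun p => ⟨p.1.erase p.2, p.2⟩) (fun p => ⟨insert p.2 p.1, p.2⟩)
    ?_ ?_ ?_ ?_ ?_ <;> rintro ⟨S, s⟩ hp <;> simp_all [insert_erase]

lemma aminus_aplus_apply (V : Finset (Fin N) → ℝ) (S : Finset (Fin N)) :
    Aminus N (Aplus N V) S = Aplus N (Aminus N V) S + ((N : ℝ) - 2 * S.card) * V S := by
  unfold Aplus Aminus
  have hL : ∀ b ∈ Sᶜ, ∑ s ∈ insert b S, V ((insert b S).erase s)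
      = V S + ∑ s ∈ S, V (insert b (S.erase s)) := by
    intro b hb
    have hbS : b ∉ S := mem_compl.mp hb
    rw [sum_insert hbS, erase_insert hbS]
    congr 1
    exact sum_congr rfl fun s hs => by rw [erase_insert_of_ne (ne_of_mem_of_not_mem hs hbS).symm]
  have hR : ∀ s ∈ S, ∑ b ∈ (S.erase s)ᶜ, V (insert b (S.erase s))
      = V S + ∑ b ∈ Sᶜ, V (insert b (S.erase s)) := by
    intro s hs
    rw [compl_erase, sum_insert (by simp [hs]), insert_erase hs]
  rw [sum_congr rfl hL, sum_congr rfl hR, sum_add_distrib, sum_add_distrib, sum_const, sum_const,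
    sum_comm, card_compl, Fintype.card_fin, nsmul_eq_mul, nsmul_eq_mul,
    Nat.cast_sub (by simpa using card_le_univ S)]
  ring

lemma aminus_aplus_of_suppOn {m : ℕ} {V : Finset (Fin N) → ℝ} (h : suppOn N m V) :
    Aminus N (Aplus N V) = Aplus N (Aminus N V) + ((N : ℝ) - 2 * m) • V := by
  funext S
  rw [Pi.add_apply, Pi.smul_apply, smul_eq_mul, aminus_aplus_apply]
  rcases eq_or_ne S.card m with hS | hS
  · rw [hS]
  · rw [h S hS, mul_zero, mul_zero]

lemma memW.aminus_eq_zero {k : ℕ} {W : Finset (Fin N) → ℝ} (h : memW N k W) :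
    Aminus N W = 0 := by
  have h' := h.2 (Aminus N W) (suppOn_aminus h.1)
  rwa [inner'_comm, inner'_aplus, inner'_self_eq_zero] at h'

lemma aminus_aplus_iterate_succ {k : ℕ} {W : Finset (Fin N) → ℝ} (hW : suppOn N k W)
    (hW₀ : Aminus N W = 0) (j : ℕ) :
    Aminus N ((Aplus N)^[j + 1] W) = mcoef N k j • (Aplus N)^[j] W := by
  induction j with
  | zero =>
    rw [Function.iterate_one, aminus_aplus_of_suppOn hW, hW₀, aplus_zero]
    simp [mcoef]
  | succ j ih =>
    rw [Function.iterate_succ_apply', aminus_aplus_of_suppOn (suppOn_aplus_iterate hW (j + 1)),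
      ih, aplus_smul, ← Function.iterate_succ_apply' (Aplus N), ← add_smul, mcoef, mcoef,
      sum_range_succ _ (j + 1)]
    congr 1
    push_cast
    ring

lemma inner'_aplus_iterate_eq_zero_of_lt {k a b : ℕ} {W : Finset (Fin N) → ℝ}
    (hW : memW N k W) (V : Finset (Fin N) → ℝ) (hab : b < a) :
    inner' N ((Aplus N)^[a] V) ((Aplus N)^[b] W) = 0 := by
  obtain ⟨a, rfl⟩ : ∃ a', a = a' + 1 := ⟨a - 1, by omega⟩
  rw [Function.iterate_succ_apply', inner'_aplus]
  cases b with
  | zero => simp [hW.aminus_eq_zero, inner']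
  | succ b =>
    rw [aminus_aplus_iterate_succ hW.1 hW.aminus_eq_zero, inner'_smul_right,
      inner'_aplus_iterate_eq_zero_of_lt hW V (by omega), mul_zero]

lemma inner'_aplus_iterate_eq_zero {k l a b : ℕ} {V W : Finset (Fin N) → ℝ}
    (hV : memW N k V) (hW : memW N l W) (hab : a ≠ b) :
    inner' N ((Aplus N)^[a] V) ((Aplus N)^[b] W) = 0 := by
  rcases hab.lt_or_gt with h | h
  · rw [inner'_comm]
    exact inner'_aplus_iterate_eq_zero_of_lt hV W h
  · exact inner'_aplus_iterate_eq_zero_of_lt hW V h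

lemma memW_zero {V : Finset (Fin N) → ℝ} (hV : suppOn N 0 V) : memW N 0 V :=
  ⟨hV, fun _ hU => inner'_eq_zero_of_suppOn hV (suppOn_aplus hU) zero_ne_one⟩

lemma exists_eq_add_aplus {r : ℕ} {V : Finset (Fin N) → ℝ} (hV : suppOn N (r + 1) V) :
    ∃ W U : Finset (Fin N) → ℝ, memW N (r + 1) W ∧ suppOn N r U ∧ V = W + Aplus N U := by
  let K : Submodule ℝ (EuclideanSpace ℝ (Finset (Fin N))) :=
    ((sphereSubmodule N r).map (aplusLinearMap N)).comap (WithLp.linearEquiv 2 ℝ _).toLinearMap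
  obtain ⟨p, hp, q, hq, hpq⟩ := Submodule.mem_sup.mp
    (K.sup_orthogonal_of_hasOrthogonalProjection ▸ Submodule.mem_top : WithLp.toLp 2 V ∈ K ⊔ Kᗮ)
  obtain ⟨U, hU, hUp⟩ := Submodule.mem_map.mp hp
  have hV_eq : V = q + Aplus N U := by
    rw [show Aplus N U = p from hUp, ← WithLp.ofLp_add, add_comm, hpq]
  refine ⟨q, U, ⟨fun S hS => ?_, fun U₀ hU₀ => ?_⟩, hU, hV_eq⟩
  · have := congrFun hV_eq S
    rwa [Pi.add_apply, hV S hS, suppOn_aplus hU S hS, add_zero, eq_comm] at this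
  · rw [inner'_comm, inner'_eq_inner]
    exact (K.mem_orthogonal q).mp hq _ (Submodule.mem_map_of_mem (f := aplusLinearMap N) hU₀)

lemma exists_sum_aplus_iterate_memW (r : ℕ) {V : Finset (Fin N) → ℝ} (hV : suppOn N r V) :
    ∃ W : ℕ → Finset (Fin N) → ℝ, (∀ k ≤ r, memW N k (W k)) ∧
      V = ∑ k ∈ range (r + 1), (Aplus N)^[r - k] (W k) := by
  induction r generalizing V with
  | zero => exact ⟨fun _ => V, fun k hk => (Nat.le_zero.mp hk).symm ▸ memW_zero hV, by simp⟩
  | succ r ih =>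
    obtain ⟨W', U, hW', hU, rfl⟩ := exists_eq_add_aplus hV
    obtain ⟨W, hW, rfl⟩ := ih hU
    refine ⟨Function.update W (r + 1) W', fun k hk => ?_, ?_⟩
    · rcases eq_or_ne k (r + 1) with rfl | hk'
      · simpa using hW'
      · simpa [hk'] using hW k (by omega)
    · rw [sum_range_succ _ (r + 1), Function.update_self, Nat.sub_self, Function.iterate_zero, id,
        add_comm, aplus_sum]
      congr 1
      refine sum_congr rfl fun k hk => ?_
      have hk : k < r + 1 := mem_range.mp hk
      rw [Function.update_of_ne hk.ne, Nat.sub_add_comm (Nat.le_of_lt_succ hk),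
        Function.iterate_succ_apply']

theorem sphere_decomposition_general (N r : ℕ) :
    (∀ V : Finset (Fin N) → ℝ, suppOn N r V →
      ∃ W : ℕ → Finset (Fin N) → ℝ, (∀ k ≤ r, memW N k (W k)) ∧
        V = ∑ k ∈ Finset.range (r + 1), (Aplus N)^[r - k] (W k)) ∧
    (∀ W : ℕ → Finset (Fin N) → ℝ, (∀ k ≤ r, memW N k (W k)) →
      ∀ k₁ ≤ r, ∀ k₂ ≤ r, k₁ ≠ k₂ →
        inner' N ((Aplus N)^[r - k₁] (W k₁)) ((Aplus N)^[r - k₂] (W k₂)) = 0) :=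
  ⟨fun _ hV => exists_sum_aplus_iterate_memW r hV,
    fun _ hW _ hk₁ _ hk₂ hne => inner'_aplus_iterate_eq_zero (hW _ hk₁) (hW _ hk₂) (by omega)⟩

/-- every `V` supported on `Σ_r` decomposes as `V = Σ_{k=0}^{r} A₊^{r−k}W_k`
with `W_k ∈ W_k`; moreover for any choice of `W_k ∈ W_k`, the vectors `A₊^{r−k}W_k`
are pairwise orthogonal. -/
theorem sphere_decomposition (N r : ℕ) (hN : 1 ≤ N) (hr : r ≤ N) :
    (∀ V : Finset (Fin N) → ℝ, suppOn N r V →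
      ∃ W : ℕ → Finset (Fin N) → ℝ, (∀ k ≤ r, memW N k (W k)) ∧
        V = ∑ k ∈ Finset.range (r + 1), (Aplus N)^[r - k] (W k)) ∧
    (∀ W : ℕ → Finset (Fin N) → ℝ, (∀ k ≤ r, memW N k (W k)) →
      ∀ k₁ ≤ r, ∀ k₂ ≤ r, k₁ ≠ k₂ →
        inner' N ((Aplus N)^[r - k₁] (W k₁)) ((Aplus N)^[r - k₂] (W k₂)) = 0) :=
  sphere_decomposition_general N r
end

section
/- Fix real numbers α, β, an integer 0 ≤ r ≤ N, and λ ∈ ℝ. Suppose the real numbers c_0, …, c_{N−r} satisfy, for every 0 ≤ j ≤ N−r, (2(r+j)(α−N) + βN)·c_j + (2√((r+j)(r+j+1)) − β)·m(r,j)·c_{j+1} + (2√((r+j)(r+j−1)) − β)·c_{j−1} = λ·c_j, with the conventions c_{−1} = 0 and c_{N−r+1} = 0. Then for every W ∈ W_r, the vertex function V = Σ_{j=0}^{N−r} c_j·A₊^{j}W satisfies HBDO V = λV. -/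
open Finset

/-! `W ∈ W_r` is annihilated by `A₋`, since `A₋` is the adjoint of `A₊` and `A₋W` lies in
`ℓ²(Σ_{r−1})`. The commutator `A₋A₊ − A₊A₋` acts on `ℓ²(Σ_k)` as multiplication by `N − 2k`, so
inductively `A₋A₊^{j+1}W = m(r,j)·A₊^{j}W`, while `T` acts on `ℓ²(Σ_{r+j})` as `√(2(r+j))`.
Hence `A₊`, `A₋`, `L` and `T` preserve `span {A₊^{j}W}`, and on coefficient sequences
`HBDO` becomes exactly the tridiagonal matrix of the hypothesis. -/

theorem sqrt_two_mul_mul_sqrt_two_mul {x : ℝ} (hx : 0 ≤ x) (y : ℝ) :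
    √(2 * x) * √(2 * y) = 2 * √(x * y) := by
  rw [← Real.sqrt_mul (by positivity), show 2 * x * (2 * y) = 2 ^ 2 * (x * y) by ring,
    Real.sqrt_mul (by positivity), Real.sqrt_sq zero_le_two]

section Hypercube

variable {N : ℕ}

theorem Aplus_sum {ι : Type*} (s : Finset ι) (f : ι → Finset (Fin N) → ℝ) :
    Aplus N (∑ i ∈ s, f i) = ∑ i ∈ s, Aplus N (f i) := by
  funext S
  simp only [Aplus, Finset.sum_apply]
  exact Finset.sum_comm

theorem Aplus_smul (k : ℝ) (V : Finset (Fin N) → ℝ) : Aplus N (k • V) = k • Aplus N V := by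
  funext S
  simp [Aplus, Finset.mul_sum]

theorem Aminus_sum {ι : Type*} (s : Finset ι) (f : ι → Finset (Fin N) → ℝ) :
    Aminus N (∑ i ∈ s, f i) = ∑ i ∈ s, Aminus N (f i) := by
  funext S
  simp only [Aminus, Finset.sum_apply]
  exact Finset.sum_comm

theorem Aminus_smul (k : ℝ) (V : Finset (Fin N) → ℝ) : Aminus N (k • V) = k • Aminus N V := by
  funext S
  simp [Aminus, Finset.mul_sum]

theorem Lap_eq (V : Finset (Fin N) → ℝ) : Lap N V = (N : ℝ) • V - Aplus N V - Aminus N V := by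
  funext S
  simp only [Lap, Adj, Pi.sub_apply, Pi.smul_apply, smul_eq_mul]
  ring

theorem suppOn.mul_card_apply {k : ℕ} {V : Finset (Fin N) → ℝ} (h : suppOn N k V)
    (f : ℕ → ℝ) (S : Finset (Fin N)) : f S.card * V S = f k * V S := by
  by_cases hS : S.card = k
  · rw [hS]
  · rw [h S hS, mul_zero, mul_zero]

theorem suppOn_Aplus {k : ℕ} {V : Finset (Fin N) → ℝ} (h : suppOn N k V) :
    suppOn N (k + 1) (Aplus N V) := by
  intro S hS
  refine Finset.sum_eq_zero fun s hs => h _ ?_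
  have : 0 < S.card := Finset.card_pos.mpr ⟨s, hs⟩
  rw [Finset.card_erase_of_mem hs]
  omega

theorem suppOn_iterate_Aplus {r : ℕ} {W : Finset (Fin N) → ℝ} (hW : suppOn N r W) (j : ℕ) :
    suppOn N (r + j) ((Aplus N)^[j] W) := by
  induction j with
  | zero => exact hW
  | succ j ih =>
    rw [Function.iterate_succ_apply']
    exact suppOn_Aplus ih

theorem iterate_Aplus_eq_zero {r n : ℕ} {W : Finset (Fin N) → ℝ} (hW : suppOn N r W)
    (hn : N < r + n) : (Aplus N)^[n] W = 0 := by
  funext S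
  have : S.card ≤ N := by simpa using Finset.card_le_univ S
  exact suppOn_iterate_Aplus hW n S (by omega)

theorem suppOn_Aminus {k : ℕ} {V : Finset (Fin N) → ℝ} (h : suppOn N k V) :
    suppOn N (k - 1) (Aminus N V) := by
  intro R hR
  refine Finset.sum_eq_zero fun b hb => h _ ?_
  rw [Finset.card_insert_of_notMem (Finset.mem_compl.mp hb)]
  omega

theorem inner'_Aplus (W U : Finset (Fin N) → ℝ) :
    inner' N W (Aplus N U) = inner' N (Aminus N W) U := by
  simp only [inner', Aplus, Aminus, Finset.mul_sum, Finset.sum_mul]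
  rw [Finset.sum_sigma' Finset.univ (fun S => S) (fun S s => W S * U (S.erase s)),
    Finset.sum_sigma' Finset.univ (fun R => Rᶜ) (fun R b => W (insert b R) * U R)]
  refine Finset.sum_bij' (fun p _ => ⟨p.1.erase p.2, p.2⟩) (fun q _ => ⟨insert q.2 q.1, q.2⟩)
    ?_ ?_ ?_ ?_ ?_ <;> simp only [Finset.mem_sigma, Finset.mem_univ, true_and, Finset.mem_compl]
  · simp
  · simp
  · intro p hp
    simp [Finset.insert_erase hp]
  · intro q hq
    simp [Finset.erase_insert hq]
  · intro p hp
    rw [Finset.insert_erase hp]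

theorem eq_zero_of_inner'_self_eq_zero {V : Finset (Fin N) → ℝ} (h : inner' N V V = 0) :
    V = 0 := by
  funext S
  exact (Finset.sum_mul_self_eq_zero_iff _ _).mp h S (Finset.mem_univ S)

theorem Aminus_eq_zero_of_memW {r : ℕ} {W : Finset (Fin N) → ℝ} (hW : memW N r W) :
    Aminus N W = 0 := by
  apply eq_zero_of_inner'_self_eq_zero
  rw [← inner'_Aplus]
  exact hW.2 _ (suppOn_Aminus hW.1)

theorem Cop_apply (V : Finset (Fin N) → ℝ) (S : Finset (Fin N)) :
    Cop N V S = ((N : ℝ) - 2 * S.card) * V S := by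
  have hAminusAplus : Aminus N (Aplus N V) S
      = ∑ b ∈ Sᶜ, (V S + ∑ s ∈ S, V (insert b (S.erase s))) := by
    refine Finset.sum_congr rfl fun b hb => ?_
    have hbS : b ∉ S := Finset.mem_compl.mp hb
    rw [Aplus, Finset.sum_insert hbS, Finset.erase_insert hbS]
    congr 1
    refine Finset.sum_congr rfl fun s hs => ?_
    rw [Finset.erase_insert_of_ne (by rintro rfl; exact hbS hs)]
  have hAplusAminus : Aplus N (Aminus N V) S
      = ∑ s ∈ S, (V S + ∑ b ∈ Sᶜ, V (insert b (S.erase s))) := by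
    refine Finset.sum_congr rfl fun s hs => ?_
    rw [Aminus, Finset.compl_erase, Finset.sum_insert (by simp [hs]), Finset.insert_erase hs]
  have hcard : Sᶜ.card = N - S.card := by simp [Finset.card_compl]
  have hle : S.card ≤ N := by simpa using Finset.card_le_univ S
  rw [Cop, hAminusAplus, hAplusAminus, Finset.sum_add_distrib, Finset.sum_add_distrib,
    Finset.sum_comm (s := Sᶜ), Finset.sum_const, Finset.sum_const, hcard]
  push_cast [nsmul_eq_mul, Nat.cast_sub hle]
  ring

theorem Cop_of_suppOn {k : ℕ} {V : Finset (Fin N) → ℝ} (h : suppOn N k V) :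
    Cop N V = ((N : ℝ) - 2 * k) • V := by
  funext S
  rw [Cop_apply]
  exact h.mul_card_apply (fun k : ℕ => (N : ℝ) - 2 * k) S

theorem Aminus_Aplus (V : Finset (Fin N) → ℝ) :
    Aminus N (Aplus N V) = Aplus N (Aminus N V) + Cop N V := by
  funext S
  simp [Cop]

theorem Aminus_iterate_Aplus {r : ℕ} {W : Finset (Fin N) → ℝ} (hW : suppOn N r W)
    (h0 : Aminus N W = 0) (j : ℕ) :
    Aminus N ((Aplus N)^[j + 1] W) = mcoef N r j • (Aplus N)^[j] W := by
  induction j with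
  | zero =>
    rw [Function.iterate_one, Aminus_Aplus, h0, Cop_of_suppOn hW]
    funext S
    simp [Aplus, mcoef]
  | succ j ih =>
    rw [Function.iterate_succ_apply', Aminus_Aplus, ih, Aplus_smul,
      ← Function.iterate_succ_apply' (Aplus N), Cop_of_suppOn (suppOn_iterate_Aplus hW (j + 1)),
      ← add_smul]
    have hm : mcoef N r (j + 1) = mcoef N r j + ((N : ℝ) - 2 * ((r : ℝ) + ((j + 1 : ℕ) : ℝ))) :=
      Finset.sum_range_succ _ _
    rw [hm]
    congr 1
    push_cast
    ring

noncomputable def ladder (W : Finset (Fin N) → ℝ) (n : ℕ) (a : ℕ → ℝ) : Finset (Fin N) → ℝ :=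
  ∑ j ∈ Finset.range (n + 1), a j • (Aplus N)^[j] W

section Ladder

variable {W : Finset (Fin N) → ℝ} {n : ℕ}

theorem ladder_congr {a b : ℕ → ℝ} (h : ∀ j ≤ n, a j = b j) : ladder W n a = ladder W n b :=
  Finset.sum_congr rfl fun j hj => by rw [h j (Nat.lt_succ_iff.mp (Finset.mem_range.mp hj))]

theorem smul_ladder (k : ℝ) (a : ℕ → ℝ) : k • ladder W n a = ladder W n (fun j => k * a j) := by
  simp only [ladder, Finset.smul_sum, smul_smul]

theorem ladder_add (a b : ℕ → ℝ) :
    ladder W n a + ladder W n b = ladder W n (fun j => a j + b j) := by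
  simp only [ladder, ← Finset.sum_add_distrib, add_smul]

theorem ladder_sub (a b : ℕ → ℝ) :
    ladder W n a - ladder W n b = ladder W n (fun j => a j - b j) := by
  simp only [ladder, ← Finset.sum_sub_distrib, sub_smul]

variable {r : ℕ}

theorem Aplus_ladder (hW : suppOn N r W) (hn : N ≤ r + n) (a : ℕ → ℝ) :
    Aplus N (ladder W n a) = ladder W n (fun j => if j = 0 then 0 else a (j - 1)) := by
  simp only [ladder, Aplus_sum, Aplus_smul, ← Function.iterate_succ_apply' (Aplus N)]
  rw [Finset.sum_range_succ, iterate_Aplus_eq_zero hW (by omega), smul_zero, add_zero,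
    Finset.sum_range_succ' _ n]
  simp

theorem Aminus_ladder (hW : suppOn N r W) (h0 : Aminus N W = 0) {a : ℕ → ℝ}
    (ha : a (n + 1) = 0) :
    Aminus N (ladder W n a) = ladder W n (fun j => mcoef N r j * a (j + 1)) := by
  simp only [ladder, Aminus_sum, Aminus_smul]
  rw [Finset.sum_range_succ', Function.iterate_zero_apply, h0, smul_zero, add_zero,
    Finset.sum_range_succ _ n, ha, mul_zero, zero_smul, add_zero]
  simp only [Aminus_iterate_Aplus hW h0, smul_smul, mul_comm]

theorem Lap_ladder (hW : suppOn N r W) (h0 : Aminus N W = 0) (hn : N ≤ r + n) {a : ℕ → ℝ}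
    (ha : a (n + 1) = 0) :
    Lap N (ladder W n a) = ladder W n
      (fun j => N * a j - (if j = 0 then 0 else a (j - 1)) - mcoef N r j * a (j + 1)) := by
  rw [Lap_eq, smul_ladder, Aplus_ladder hW hn, Aminus_ladder hW h0 ha, ladder_sub, ladder_sub]

theorem Tdiag_ladder (hW : suppOn N r W) (a : ℕ → ℝ) :
    Tdiag N (ladder W n a) = ladder W n (fun j => √(2 * ((r : ℝ) + j)) * a j) := by
  funext S
  simp only [ladder, Tdiag, Finset.sum_apply, Pi.smul_apply, smul_eq_mul, Finset.mul_sum]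
  refine Finset.sum_congr rfl fun j _ => ?_
  have hT := (suppOn_iterate_Aplus hW j).mul_card_apply (fun k : ℕ => √(2 * (k : ℝ))) S
  push_cast at hT
  linear_combination a j * hT

theorem HBDO_ladder (α β : ℝ) (hW : suppOn N r W) (h0 : Aminus N W = 0) (hn : N ≤ r + n)
    {a : ℕ → ℝ} (ha : a (n + 1) = 0) :
    HBDO N α β (ladder W n a) = ladder W n (fun j =>
      (2 * ((r : ℝ) + (j : ℝ)) * (α - (N : ℝ)) + β * (N : ℝ)) * a j
        + (2 * Real.sqrt (((r : ℝ) + (j : ℝ)) * ((r : ℝ) + (j : ℝ) + 1)) - β)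
            * mcoef N r j * a (j + 1)
        + (2 * Real.sqrt (((r : ℝ) + (j : ℝ)) * ((r : ℝ) + (j : ℝ) - 1)) - β)
            * (if j = 0 then 0 else a (j - 1))) := by
  change Tdiag N (α • Tdiag N _ - Lap N (Tdiag N _)) + β • Lap N _ = _
  rw [Tdiag_ladder hW, Lap_ladder hW h0 hn (by simp [ha]), smul_ladder, ladder_sub,
    Tdiag_ladder hW, Lap_ladder hW h0 hn ha, smul_ladder, ladder_add]
  refine ladder_congr fun j _ => ?_
  set t : ℕ → ℝ := fun j => √(2 * ((r : ℝ) + j))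
  have hsq : t j * t j = 2 * (r + j) := Real.mul_self_sqrt (by positivity)
  have hup : t j * t (j + 1) = 2 * √((r + j) * (r + j + 1)) := by
    simp only [t, sqrt_two_mul_mul_sqrt_two_mul (by positivity : (0 : ℝ) ≤ r + j)]
    congr 2
    push_cast
    ring
  have hdown : t j * (if j = 0 then 0 else t (j - 1) * a (j - 1))
      = 2 * √((r + j) * (r + j - 1)) * (if j = 0 then 0 else a (j - 1)) := by
    rcases j with _ | k
    · simp
    · simp only [t, Nat.add_one_ne_zero, if_false, Nat.add_sub_cancel, ← mul_assoc,
        sqrt_two_mul_mul_sqrt_two_mul (by positivity : (0 : ℝ) ≤ r + (k + 1 : ℕ))]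
      congr 3
      push_cast
      ring
  linear_combination (α - N) * a j * hsq + mcoef N r j * a (j + 1) * hup + hdown

end Ladder

end Hypercube

theorem hbdo_eigenvector_general (N : ℕ) (α β : ℝ) (r : ℕ) (lam : ℝ)
    (c : ℕ → ℝ) (hc : ∀ j, N - r < j → c j = 0)
    (heig : ∀ j ≤ N - r,
      (2 * ((r : ℝ) + (j : ℝ)) * (α - (N : ℝ)) + β * (N : ℝ)) * c j
        + (2 * Real.sqrt (((r : ℝ) + (j : ℝ)) * ((r : ℝ) + (j : ℝ) + 1)) - β)
            * mcoef N r j * c (j + 1)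
        + (2 * Real.sqrt (((r : ℝ) + (j : ℝ)) * ((r : ℝ) + (j : ℝ) - 1)) - β)
            * (if j = 0 then 0 else c (j - 1))
      = lam * c j)
    (W : Finset (Fin N) → ℝ) (hW : memW N r W) :
    HBDO N α β (∑ j ∈ Finset.range (N - r + 1), c j • (Aplus N)^[j] W)
      = lam • ∑ j ∈ Finset.range (N - r + 1), c j • (Aplus N)^[j] W := by
  change HBDO N α β (ladder W (N - r) c) = lam • ladder W (N - r) c
  rw [HBDO_ladder α β hW.1 (Aminus_eq_zero_of_memW hW) (by omega) (hc _ (by omega)),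
    smul_ladder]
  exact ladder_congr heig

/-- if `(c_0,…,c_{N−r})` satisfies the tridiagonal eigenvector equations
(with conventions `c_{−1} = 0`, `c_{N−r+1} = 0`), then for every `W ∈ W_r` the vertex
function `V = Σ_{j=0}^{N−r} c_j·A₊^{j}W` satisfies `HBDO V = λV`. -/
theorem hbdo_eigenvector (N : ℕ) (hN : 1 ≤ N) (α β : ℝ) (r : ℕ) (hr : r ≤ N) (lam : ℝ)
    (c : ℕ → ℝ) (hc : ∀ j, N - r < j → c j = 0)
    (heig : ∀ j ≤ N - r,
      (2 * ((r : ℝ) + (j : ℝ)) * (α - (N : ℝ)) + β * (N : ℝ)) * c j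
        + (2 * Real.sqrt (((r : ℝ) + (j : ℝ)) * ((r : ℝ) + (j : ℝ) + 1)) - β)
            * mcoef N r j * c (j + 1)
        + (2 * Real.sqrt (((r : ℝ) + (j : ℝ)) * ((r : ℝ) + (j : ℝ) - 1)) - β)
            * (if j = 0 then 0 else c (j - 1))
      = lam * c j)
    (W : Finset (Fin N) → ℝ) (hW : memW N r W) :
    HBDO N α β (∑ j ∈ Finset.range (N - r + 1), c j • (Aplus N)^[j] W)
      = lam • ∑ j ∈ Finset.range (N - r + 1), c j • (Aplus N)^[j] W :=
  hbdo_eigenvector_general N α β r lam c hc heig W hW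
end
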